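/- Let Xᵏ ∈ F with N(Xᵏ) > 0, let Δₖ > 0, and let αₖ be a minimizer of q(α, Xᵏ) over 0 ≤ α ≤ min{‖D(Xᵏ)‖_F / γ_max(Xᵏ), Δₖ}. Then q(αₖ, Xᵏ) ≤ f(Xᵏ) − (1/2) · min{ N(Xᵏ)² / (M₂ (N(Xᵏ) + (1/2) M₁² n³)), N(Xᵏ)/M₁, Δₖ N(Xᵏ)/√(N(Xᵏ) + (1/2) M₁² n³) }. -/

import Mathlib

set_option autoImplicit false

open Matrix Set Filter

attribute [local instance] Matrix.normedAddCommGroup Matrix.normedSpace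

namespace BoxSDP

open scoped Classical

/-- Trace inner product `⟨A|B⟩ = Trace(Aᵀ B)`. -/
noncomputable def mip {m k : Type*} [Fintype m] [Fintype k]
    (A B : Matrix m k ℝ) : ℝ :=
  (Aᵀ * B).trace

/-- Frobenius norm `‖A‖_F = √⟨A|A⟩`. -/
noncomputable def fnorm {m k : Type*} [Fintype m] [Fintype k]
    (A : Matrix m k ℝ) : ℝ :=
  Real.sqrt (mip A A)

/-- The feasible set `F = {X : O ⪯ X ⪯ I}` (membership forces symmetry). -/
def Feas (n : ℕ) : Set (Matrix (Fin n) (Fin n) ℝ) :=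
  {X | X.PosSemidef ∧ (1 - X).PosSemidef}

/-- Square root of a positive semidefinite matrix (junk value `0` otherwise);
agrees with `A^{1/2} = Q K^{1/2} Qᵀ` on positive semidefinite matrices. -/
noncomputable def psqrt {m : Type*} [Fintype m] [DecidableEq m]
    (A : Matrix m m ℝ) : Matrix m m ℝ :=
  if h : A.PosSemidef then
    (h.1.eigenvectorUnitary : Matrix m m ℝ) * Matrix.diagonal ((↑) ∘ Real.sqrt ∘ h.1.eigenvalues)
      * (star (h.1.eigenvectorUnitary : Matrix m m ℝ))
  else 0

/-- Fourth root `A^{1/4}` of a positive semidefinite matrix. -/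
noncomputable def proot4 {m : Type*} [Fintype m] [DecidableEq m]
    (A : Matrix m m ℝ) : Matrix m m ℝ :=
  psqrt (psqrt A)

/-- The 2-norm of a symmetric matrix: its largest absolute eigenvalue. -/
noncomputable def norm2 {m : Type*} [Fintype m] [DecidableEq m]
    (A : Matrix m m ℝ) : ℝ :=
  if h : A.IsHermitian then sSup (Set.range fun i => |h.eigenvalues i|) else 0

/-- The linear functional `H ↦ ⟨G|H⟩`, as a continuous linear map; a function
`f` has gradient matrix `G` at `X` iff `HasFDerivAt f (gradCLM G) X`. -/
noncomputable def gradCLM {n : ℕ} (G : Matrix (Fin n) (Fin n) ℝ) :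
    Matrix (Fin n) (Fin n) ℝ →L[ℝ] ℝ :=
  LinearMap.toContinuousLinearMap
    { toFun := fun H => mip G H
      map_add' := fun x y => by
        simp [mip, Matrix.mul_add]
      map_smul' := fun c x => by
        simp [mip, Matrix.mul_smul] }

/-- The Hessian bilinear form `⟨A | ∇²f(X) | B⟩` induced by the derivative
`hessOp` of the gradient map. -/
noncomputable def hform {n : ℕ}
    (hessOp : Matrix (Fin n) (Fin n) ℝ →L[ℝ] Matrix (Fin n) (Fin n) ℝ)
    (A B : Matrix (Fin n) (Fin n) ℝ) : ℝ :=
  mip A (hessOp B)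

/-- `underline-f`: the minimum of `⟨G | Y − X̂⟩` over `Y ∈ F`. -/
noncomputable def underf {n : ℕ} (G Xh : Matrix (Fin n) (Fin n) ℝ) : ℝ :=
  sInf ((fun Y => mip G (Y - Xh)) '' Feas n)

/-- First-order optimality condition at `Xs` for gradient matrix `G`. -/
def FirstOrderOpt {n : ℕ} (G Xs : Matrix (Fin n) (Fin n) ℝ) : Prop :=
  ∀ X ∈ Feas n, 0 ≤ mip G (X - Xs)

/-- A fixed eigenvalue decomposition `G = P Γ Pᵀ` of a symmetric matrix `G`,
with eigenvalues in descending order, split into the block `Pp, gp` of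
positive eigenvalues and the block `Pm, gm` of nonpositive eigenvalues. -/
structure SpecDecomp (n : ℕ) (G : Matrix (Fin n) (Fin n) ℝ) where
  np : ℕ
  nm : ℕ
  hdim : np + nm = n
  Pp : Matrix (Fin n) (Fin np) ℝ
  Pm : Matrix (Fin n) (Fin nm) ℝ
  gp : Fin np → ℝ
  gm : Fin nm → ℝ
  hgp_pos : ∀ i, 0 < gp i
  hgm_nonpos : ∀ j, gm j ≤ 0
  hgp_anti : ∀ i j : Fin np, i ≤ j → gp j ≤ gp i
  hgm_anti : ∀ i j : Fin nm, i ≤ j → gm j ≤ gm i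
  hPp_orth : Ppᵀ * Pp = 1
  hPm_orth : Pmᵀ * Pm = 1
  hPpPm : Ppᵀ * Pm = 0
  hPPT : Pp * Ppᵀ + Pm * Pmᵀ = 1
  hG : G = Pp * Matrix.diagonal gp * Ppᵀ + Pm * Matrix.diagonal gm * Pmᵀ

namespace SpecDecomp

variable {n : ℕ} {G : Matrix (Fin n) (Fin n) ℝ}

/-- `V₊(X) = P₊ᵀ X P₊`. -/
def Vp (sd : SpecDecomp n G) (X : Matrix (Fin n) (Fin n) ℝ) :
    Matrix (Fin sd.np) (Fin sd.np) ℝ :=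
  sd.Ppᵀ * X * sd.Pp

/-- `V₋(X) = P₋ᵀ (I − X) P₋`. -/
def Vm (sd : SpecDecomp n G) (X : Matrix (Fin n) (Fin n) ℝ) :
    Matrix (Fin sd.nm) (Fin sd.nm) ℝ :=
  sd.Pmᵀ * (1 - X) * sd.Pm

/-- The search direction `D(X) = P M Pᵀ` with blocks
`M₁₁ = V₊^{1/2} Γ₊ V₊^{1/2}`, `M₁₂ = γ_max P₊ᵀ X P₋`,
`M₂₁ = γ_max P₋ᵀ X P₊`, `M₂₂ = V₋^{1/2} Γ₋ V₋^{1/2}`. -/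
noncomputable def Dmat (sd : SpecDecomp n G) (X : Matrix (Fin n) (Fin n) ℝ) :
    Matrix (Fin n) (Fin n) ℝ :=
  sd.Pp * (psqrt (sd.Vp X) * Matrix.diagonal sd.gp * psqrt (sd.Vp X)) * sd.Ppᵀ
    + norm2 G • (sd.Pp * (sd.Ppᵀ * X * sd.Pm) * sd.Pmᵀ)
    + norm2 G • (sd.Pm * (sd.Pmᵀ * X * sd.Pp) * sd.Ppᵀ)
    + sd.Pm * (psqrt (sd.Vm X) * Matrix.diagonal sd.gm * psqrt (sd.Vm X)) * sd.Pmᵀ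

/-- `N(X) = ⟨G | D(X)⟩`. -/
noncomputable def Nval (sd : SpecDecomp n G) (X : Matrix (Fin n) (Fin n) ℝ) : ℝ :=
  mip G (sd.Dmat X)

end SpecDecomp

/-! In the eigenbasis of `∇f(Xᵏ)` the direction `D` has diagonal blocks `W Γ W` with
`W = V^{1/2}` and `O ⪯ V ⪯ I`; since then `V ⪯ W`, two trace monotonicity steps give
`‖W Γ W‖_F² ≤ ⟨Γ | W Γ W⟩`, and these two inner products add up to `N`. The off-diagonal blocks
`P₊ᵀ X P₋` have squared Frobenius norm at most `min(n₊, n₋) ≤ n³/4` because `X² ⪯ I`. Hence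
`‖D‖_F² ≤ N + ½ M₁² n³`. Along `S = D/‖D‖_F` the model is a quadratic with slope `-N/‖D‖_F`
and curvature at most `M₂`, and the Cauchy-point estimate on `[0, R]` yields a decrease of at
least `½ min(g²/M₂, g R)`; the bound on `‖D‖_F` turns this into the claimed one. -/

section InnerProduct

variable {m k : Type*} [Fintype m] [Fintype k]

lemma mip_add_left (A B C : Matrix m k ℝ) : mip (A + B) C = mip A C + mip B C := by
  simp [mip, Matrix.add_mul]

lemma mip_add_right (A B C : Matrix m k ℝ) : mip A (B + C) = mip A B + mip A C := by
  simp [mip, Matrix.mul_add]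

lemma mip_smul_left (c : ℝ) (A B : Matrix m k ℝ) : mip (c • A) B = c * mip A B := by
  simp [mip]

lemma mip_smul_right (c : ℝ) (A B : Matrix m k ℝ) : mip A (c • B) = c * mip A B := by
  simp [mip]

lemma mip_zero_left (A : Matrix m k ℝ) : mip 0 A = 0 := by simp [mip]

lemma mip_zero_right (A : Matrix m k ℝ) : mip A 0 = 0 := by simp [mip]

lemma mip_transpose (A B : Matrix m k ℝ) : mip Aᵀ Bᵀ = mip A B := by
  rw [mip, mip, transpose_transpose, trace_mul_comm, ← trace_transpose, transpose_mul,
    transpose_transpose]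

lemma mip_self_nonneg (A : Matrix m k ℝ) : 0 ≤ mip A A :=
  (posSemidef_conjTranspose_mul_self A).trace_nonneg

lemma mip_self_pos {A : Matrix m k ℝ} (hA : A ≠ 0) : 0 < mip A A :=
  (mip_self_nonneg A).lt_of_ne' (mt trace_conjTranspose_mul_self_eq_zero_iff.mp hA)

lemma fnorm_sq (A : Matrix m k ℝ) : fnorm A ^ 2 = mip A A :=
  Real.sq_sqrt (mip_self_nonneg A)

lemma fnorm_pos {A : Matrix m k ℝ} (hA : A ≠ 0) : 0 < fnorm A :=
  Real.sqrt_pos.mpr (mip_self_pos hA)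

lemma mip_mul_mul_transpose {a b c d : Type*} [Fintype a] [Fintype b] [Fintype c] [Fintype d]
    (P : Matrix m a ℝ) (R : Matrix m b ℝ) (P' : Matrix m c ℝ) (R' : Matrix m d ℝ)
    (A : Matrix a b ℝ) (B : Matrix c d ℝ) :
    mip (P * A * Rᵀ) (P' * B * R'ᵀ) = (Aᵀ * (Pᵀ * P') * B * (R'ᵀ * R)).trace := by
  rw [mip, transpose_mul, transpose_mul, transpose_transpose]
  simp only [Matrix.mul_assoc]
  rw [trace_mul_comm R]
  simp only [Matrix.mul_assoc]

end InnerProduct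

section MatrixFacts

open scoped MatrixOrder

lemma transpose_eq_self_of_nonneg {m : Type*} {A : Matrix m m ℝ} (hA : 0 ≤ A) : Aᵀ = A := by
  simpa using (Matrix.nonneg_iff_posSemidef.mp hA).1.eq

lemma transpose_mul_mul_nonneg {m k : Type*} [Fintype m] [Fintype k] {A : Matrix m m ℝ}
    (hA : 0 ≤ A) (B : Matrix m k ℝ) : 0 ≤ Bᵀ * A * B := by
  simpa [Matrix.nonneg_iff_posSemidef] using
    (Matrix.nonneg_iff_posSemidef.mp hA).conjTranspose_mul_mul_same B

variable {m : Type*} [Fintype m] [DecidableEq m]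

lemma trace_mul_nonneg {A B : Matrix m m ℝ} (hA : 0 ≤ A) (hB : 0 ≤ B) :
    0 ≤ (A * B).trace := by
  have h := (Matrix.nonneg_iff_posSemidef.mp hB).conjTranspose_mul_mul_same (CFC.sqrt A)
  rw [← Matrix.star_eq_conjTranspose, (CFC.sqrt_nonneg A).isSelfAdjoint.star_eq] at h
  rw [← CFC.sqrt_mul_sqrt_self A hA, mul_assoc, Matrix.trace_mul_comm]
  exact h.trace_nonneg

lemma trace_mul_le_trace_mul {S V W : Matrix m m ℝ} (hS : 0 ≤ S) (hVW : V ≤ W) :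
    (S * V).trace ≤ (S * W).trace := by
  have := trace_mul_nonneg hS (sub_nonneg.mpr hVW)
  rwa [Matrix.mul_sub, Matrix.trace_sub, sub_nonneg] at this

lemma psqrt_eq_cfc {A : Matrix m m ℝ} (hA : 0 ≤ A) : psqrt A = cfc Real.sqrt A := by
  have hA' := Matrix.nonneg_iff_posSemidef.mp hA
  rw [psqrt, dif_pos hA', hA'.1.cfc_eq, Matrix.IsHermitian.cfc, Unitary.conjStarAlgAut_apply]
  rfl

lemma psqrt_nonneg {A : Matrix m m ℝ} (hA : 0 ≤ A) : 0 ≤ psqrt A := by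
  rw [psqrt_eq_cfc hA]
  exact cfc_nonneg fun x _ => Real.sqrt_nonneg x

lemma psqrt_mul_self {A : Matrix m m ℝ} (hA : 0 ≤ A) : psqrt A * psqrt A = A := by
  rw [psqrt_eq_cfc hA, ← cfc_mul ..]
  conv_rhs => rw [← cfc_id ℝ A]
  exact cfc_congr fun x hx => Real.mul_self_sqrt (spectrum_nonneg_of_nonneg hA hx)

lemma le_psqrt {A : Matrix m m ℝ} (hA : 0 ≤ A) (hA1 : A ≤ 1) : A ≤ psqrt A := by
  rw [psqrt_eq_cfc hA]
  conv_lhs => rw [← cfc_id ℝ A]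
  refine cfc_mono fun x hx => ?_
  have h0 := spectrum_nonneg_of_nonneg hA hx
  have h1 := (CFC.le_one_iff A).mp hA1 x hx
  exact (Real.le_sqrt h0 h0).mpr (by nlinarith)

lemma mul_self_le_one {A : Matrix m m ℝ} (hA : 0 ≤ A) (hA1 : A ≤ 1) : A * A ≤ 1 := by
  have hsq : A * A = cfc (fun x : ℝ => x * x) A := by
    rw [cfc_mul .., cfc_id' ℝ A]
  rw [hsq, cfc_le_one_iff (fun x : ℝ => x * x) A]
  intro x hx
  have h0 := spectrum_nonneg_of_nonneg hA hx
  have h1 := (CFC.le_one_iff A).mp hA1 x hx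
  nlinarith

lemma mip_self_conj_psqrt_le {V Γ : Matrix m m ℝ} (hV : 0 ≤ V) (hV1 : V ≤ 1) (hΓ : Γᵀ = Γ) :
    mip (psqrt V * Γ * psqrt V) (psqrt V * Γ * psqrt V) ≤ mip Γ (psqrt V * Γ * psqrt V) := by
  set W := psqrt V
  have hW : 0 ≤ W := psqrt_nonneg hV
  have hWW : W * W = V := psqrt_mul_self hV
  have hVW : V ≤ W := le_psqrt hV hV1
  have hWt : Wᵀ = W := transpose_eq_self_of_nonneg hW
  have hconj : ∀ {A : Matrix m m ℝ}, 0 ≤ A → 0 ≤ Γ * A * Γ := fun hA => by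
    simpa [hΓ] using transpose_mul_mul_nonneg hA Γ
  calc mip (W * Γ * W) (W * Γ * W) = (Γ * V * Γ * V).trace := by
        rw [mip, transpose_mul, transpose_mul, hWt, hΓ, ← hWW]
        simp only [Matrix.mul_assoc]
        rw [trace_mul_comm W]
        simp only [Matrix.mul_assoc]
    _ ≤ (Γ * V * Γ * W).trace := trace_mul_le_trace_mul (hconj hV) hVW
    _ = (Γ * W * Γ * V).trace := by
        rw [Matrix.mul_assoc (Γ * V), trace_mul_comm, ← Matrix.mul_assoc]
    _ ≤ (Γ * W * Γ * W).trace := trace_mul_le_trace_mul (hconj hW) hVW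
    _ = mip Γ (W * Γ * W) := by
        rw [mip, hΓ]
        simp only [Matrix.mul_assoc]

lemma mul_transpose_le_one {p : Type*} [Fintype p] [DecidableEq p] {P : Matrix m p ℝ}
    (hP : Pᵀ * P = 1) : P * Pᵀ ≤ 1 := by
  have hidem : (1 - P * Pᵀ) * (1 - P * Pᵀ) = 1 - P * Pᵀ := by
    have hPP : P * Pᵀ * (P * Pᵀ) = P * Pᵀ := by
      rw [Matrix.mul_assoc, ← Matrix.mul_assoc Pᵀ, hP, Matrix.one_mul]
    simp only [Matrix.sub_mul, Matrix.mul_sub, Matrix.one_mul, Matrix.mul_one, hPP, sub_self,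
      sub_zero]
  have h := posSemidef_conjTranspose_mul_self (1 - P * Pᵀ)
  rw [conjTranspose_eq_transpose_of_trivial, transpose_sub, transpose_one, transpose_mul,
    transpose_transpose, hidem] at h
  exact Matrix.le_iff.mpr h

lemma mip_self_transpose_mul_mul_le_card {p q : Type*} [Fintype p] [DecidableEq p]
    [Fintype q] [DecidableEq q] {X : Matrix m m ℝ} (hX : 0 ≤ X) (hX1 : X ≤ 1)
    {P : Matrix m p ℝ} {Q : Matrix m q ℝ} (hP : Pᵀ * P = 1) (hQ : Qᵀ * Q = 1) :
    mip (Pᵀ * X * Q) (Pᵀ * X * Q) ≤ Fintype.card p := by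
  have hXt : Xᵀ = X := transpose_eq_self_of_nonneg hX
  have hPP : 0 ≤ P * Pᵀ := by
    simpa [Matrix.nonneg_iff_posSemidef] using posSemidef_self_mul_conjTranspose P
  calc mip (Pᵀ * X * Q) (Pᵀ * X * Q) = ((X * (P * Pᵀ) * X) * (Q * Qᵀ)).trace := by
        rw [mip, transpose_mul, transpose_mul, transpose_transpose, hXt]
        simp only [Matrix.mul_assoc]
        rw [trace_mul_comm Qᵀ]
        simp only [Matrix.mul_assoc]
    _ ≤ ((X * (P * Pᵀ) * X) * 1).trace :=
        trace_mul_le_trace_mul (by simpa [hXt] using transpose_mul_mul_nonneg hPP X)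
          (mul_transpose_le_one hQ)
    _ = ((P * Pᵀ) * (X * X)).trace := by
        rw [Matrix.mul_one, Matrix.mul_assoc, trace_mul_comm]
        simp only [Matrix.mul_assoc]
    _ ≤ ((P * Pᵀ) * 1).trace := trace_mul_le_trace_mul hPP (mul_self_le_one hX hX1)
    _ = Fintype.card p := by
        rw [Matrix.mul_one, trace_mul_comm, hP, trace_one]

lemma mip_self_transpose_mul_mul_le_min {p q : Type*} [Fintype p] [DecidableEq p]
    [Fintype q] [DecidableEq q] {X : Matrix m m ℝ} (hX : 0 ≤ X) (hX1 : X ≤ 1)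
    {P : Matrix m p ℝ} {Q : Matrix m q ℝ} (hP : Pᵀ * P = 1) (hQ : Qᵀ * Q = 1) :
    mip (Pᵀ * X * Q) (Pᵀ * X * Q) ≤ min (Fintype.card p) (Fintype.card q) := by
  have hswap : (Pᵀ * X * Q)ᵀ = Qᵀ * X * Pᵀᵀ := by
    rw [transpose_mul, transpose_mul, transpose_eq_self_of_nonneg hX, Matrix.mul_assoc]
  rw [Nat.cast_min, le_min_iff]
  refine ⟨mip_self_transpose_mul_mul_le_card hX hX1 hP hQ, ?_⟩
  rw [← mip_transpose, hswap]
  exact mip_self_transpose_mul_mul_le_card hX hX1 hQ (by rwa [transpose_transpose])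

end MatrixFacts

lemma norm2_pos {m : Type*} [Fintype m] [DecidableEq m] {A : Matrix m m ℝ}
    (hA : A.IsHermitian) (h0 : A ≠ 0) : 0 < norm2 A := by
  obtain ⟨i, hi⟩ : ∃ i, hA.eigenvalues i ≠ 0 := by
    by_contra! h
    exact h0 (hA.eigenvalues_eq_zero_iff.mp (funext h))
  rw [norm2, dif_pos hA]
  exact (abs_pos.mpr hi).trans_le (le_csSup (Set.finite_range _).bddAbove ⟨i, rfl⟩)

lemma four_mul_min_le_add_pow_three (p q : ℕ) : 4 * min p q ≤ (p + q) ^ 3 := by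
  rcases Nat.lt_or_ge (p + q) 2 with h | h
  · have : min p q = 0 := by omega
    simp [this]
  · calc 4 * min p q ≤ 2 * 2 * (p + q) := by omega
      _ ≤ (p + q) * (p + q) * (p + q) := Nat.mul_le_mul_right _ (Nat.mul_le_mul h h)
      _ = (p + q) ^ 3 := by ring

namespace SpecDecomp

open scoped MatrixOrder

lemma isHermitian {n : ℕ} {G : Matrix (Fin n) (Fin n) ℝ} (sd : SpecDecomp n G) :
    G.IsHermitian := by
  rw [Matrix.IsHermitian, conjTranspose_eq_transpose_of_trivial, sd.hG]
  simp [transpose_add, transpose_mul, Matrix.mul_assoc]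

variable {n : ℕ} {G X : Matrix (Fin n) (Fin n) ℝ} (sd : SpecDecomp n G)

lemma Pm_transpose_mul_Pp : sd.Pmᵀ * sd.Pp = 0 := by
  simpa [transpose_mul] using congrArg transpose sd.hPpPm

lemma Vp_nonneg (hX : X ∈ Feas n) : 0 ≤ sd.Vp X :=
  transpose_mul_mul_nonneg (Matrix.nonneg_iff_posSemidef.mpr hX.1) sd.Pp

lemma Vp_le_one (hX : X ∈ Feas n) : sd.Vp X ≤ 1 := by
  have h := transpose_mul_mul_nonneg (Matrix.nonneg_iff_posSemidef.mpr hX.2) sd.Pp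
  rwa [Matrix.mul_sub, Matrix.sub_mul, Matrix.mul_one, sd.hPp_orth, sub_nonneg] at h

lemma Vm_nonneg (hX : X ∈ Feas n) : 0 ≤ sd.Vm X :=
  transpose_mul_mul_nonneg (Matrix.nonneg_iff_posSemidef.mpr hX.2) sd.Pm

lemma Vm_le_one (hX : X ∈ Feas n) : sd.Vm X ≤ 1 := by
  have h := transpose_mul_mul_nonneg (Matrix.nonneg_iff_posSemidef.mpr hX.1) sd.Pm
  rwa [← sub_sub_cancel 1 X, Matrix.mul_sub, Matrix.sub_mul, Matrix.mul_one, sd.hPm_orth,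
    sub_nonneg] at h

lemma Dmat_isSymm (hX : X ∈ Feas n) : (sd.Dmat X).IsSymm := by
  have hXt : Xᵀ = X := transpose_eq_self_of_nonneg (Matrix.nonneg_iff_posSemidef.mpr hX.1)
  have hWp := transpose_eq_self_of_nonneg (psqrt_nonneg (sd.Vp_nonneg hX))
  have hWm := transpose_eq_self_of_nonneg (psqrt_nonneg (sd.Vm_nonneg hX))
  rw [Matrix.IsSymm, Dmat]
  simp only [transpose_add, transpose_smul, transpose_mul, transpose_transpose, hWp, hWm,
    diagonal_transpose, hXt, Matrix.mul_assoc]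
  abel

lemma mip_Dmat_self (X : Matrix (Fin n) (Fin n) ℝ) :
    mip (sd.Dmat X) (sd.Dmat X) =
      mip (psqrt (sd.Vp X) * diagonal sd.gp * psqrt (sd.Vp X))
        (psqrt (sd.Vp X) * diagonal sd.gp * psqrt (sd.Vp X))
      + norm2 G ^ 2 * mip (sd.Ppᵀ * X * sd.Pm) (sd.Ppᵀ * X * sd.Pm)
      + norm2 G ^ 2 * mip (sd.Pmᵀ * X * sd.Pp) (sd.Pmᵀ * X * sd.Pp)
      + mip (psqrt (sd.Vm X) * diagonal sd.gm * psqrt (sd.Vm X))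
        (psqrt (sd.Vm X) * diagonal sd.gm * psqrt (sd.Vm X)) := by
  rw [Dmat]
  simp only [mip_add_left, mip_add_right, mip_smul_left, mip_smul_right, mip_mul_mul_transpose,
    sd.hPp_orth, sd.hPm_orth, sd.hPpPm, sd.Pm_transpose_mul_Pp, Matrix.mul_one, Matrix.mul_zero,
    Matrix.zero_mul, trace_zero, mul_zero, add_zero, zero_add]
  simp only [mip]
  ring

lemma Nval_eq (X : Matrix (Fin n) (Fin n) ℝ) :
    sd.Nval X =
      mip (diagonal sd.gp) (psqrt (sd.Vp X) * diagonal sd.gp * psqrt (sd.Vp X))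
      + mip (diagonal sd.gm) (psqrt (sd.Vm X) * diagonal sd.gm * psqrt (sd.Vm X)) := by
  rw [Nval]
  conv_lhs => arg 1; rw [sd.hG]
  rw [Dmat]
  simp only [mip_add_left, mip_add_right, mip_smul_right, mip_mul_mul_transpose,
    sd.hPp_orth, sd.hPm_orth, sd.hPpPm, sd.Pm_transpose_mul_Pp, Matrix.mul_one, Matrix.mul_zero,
    Matrix.zero_mul, trace_zero, mul_zero, add_zero, zero_add]
  simp only [mip]

lemma mip_Dmat_self_le (hX : X ∈ Feas n) :
    mip (sd.Dmat X) (sd.Dmat X) ≤ sd.Nval X + 2 * norm2 G ^ 2 * min sd.np sd.nm := by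
  have hX0 : 0 ≤ X := Matrix.nonneg_iff_posSemidef.mpr hX.1
  have hX1 : X ≤ 1 := Matrix.le_iff.mpr hX.2
  have hp := mip_self_conj_psqrt_le (sd.Vp_nonneg hX) (sd.Vp_le_one hX) (diagonal_transpose sd.gp)
  have hm := mip_self_conj_psqrt_le (sd.Vm_nonneg hX) (sd.Vm_le_one hX) (diagonal_transpose sd.gm)
  have hpm := mip_self_transpose_mul_mul_le_min hX0 hX1 sd.hPp_orth sd.hPm_orth
  have hmp := mip_self_transpose_mul_mul_le_min hX0 hX1 sd.hPm_orth sd.hPp_orth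
  simp only [Fintype.card_fin, min_comm sd.nm sd.np] at hpm hmp
  rw [sd.mip_Dmat_self, sd.Nval_eq]
  nlinarith [sq_nonneg (norm2 G)]

lemma mip_Dmat_self_le_cube (hX : X ∈ Feas n) :
    mip (sd.Dmat X) (sd.Dmat X) ≤ sd.Nval X + 1 / 2 * norm2 G ^ 2 * (n : ℝ) ^ 3 := by
  have hmin : (4 * min sd.np sd.nm : ℝ) ≤ (n : ℝ) ^ 3 := by
    exact_mod_cast sd.hdim ▸ four_mul_min_le_add_pow_three sd.np sd.nm
  nlinarith [sd.mip_Dmat_self_le hX, sq_nonneg (norm2 G)]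

end SpecDecomp

lemma exists_mem_Icc_quadratic_le {g h M R : ℝ} (hg : 0 < g) (hR : 0 ≤ R) (hh : |h| ≤ M) :
    ∃ a ∈ Icc 0 R, -(a * g) + a ^ 2 / 2 * h ≤ -(1 / 2 * min (g ^ 2 / M) (g * R)) := by
  rcases le_or_gt h 0 with hh0 | hh0
  · refine ⟨R, ⟨hR, le_rfl⟩, ?_⟩
    have : R ^ 2 / 2 * h ≤ 0 := mul_nonpos_of_nonneg_of_nonpos (by positivity) hh0
    nlinarith [min_le_right (g ^ 2 / M) (g * R)]
  rcases le_or_gt (g / h) R with hgh | hgh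
  · refine ⟨g / h, ⟨by positivity, hgh⟩, ?_⟩
    have hM : g ^ 2 / M ≤ g ^ 2 / h :=
      div_le_div_of_nonneg_left (sq_nonneg g) hh0 ((le_abs_self h).trans hh)
    have hval : -(g / h * g) + (g / h) ^ 2 / 2 * h = -(g ^ 2 / h / 2) := by
      field_simp
      ring
    linarith [min_le_left (g ^ 2 / M) (g * R)]
  · refine ⟨R, ⟨hR, le_rfl⟩, ?_⟩
    have hRh : R * h < g := (lt_div_iff₀ hh0).mp hgh
    nlinarith [min_le_right (g ^ 2 / M) (g * R), mul_le_mul_of_nonneg_left hRh.le hR]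

lemma min_le_min_cauchy_decrease {N d γ Δ M₁ M₂ B : ℝ} (hN : 0 < N) (hd : 0 < d) (hγ : 0 < γ)
    (hΔ : 0 ≤ Δ) (hM₂ : 0 ≤ M₂) (hγM₁ : γ ≤ M₁) (hdB : d ^ 2 ≤ B) :
    min (min (N ^ 2 / (M₂ * B)) (N / M₁)) (Δ * N / √B)
      ≤ min ((N / d) ^ 2 / M₂) (N / d * min (d / γ) Δ) := by
  have hsqrt : d ≤ √B := Real.le_sqrt_of_sq_le hdB
  refine le_min ((min_le_left _ _).trans ((min_le_left _ _).trans ?_)) ?_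
  · rw [div_pow, div_div, mul_comm (d ^ 2), ← div_div, ← div_div]
    gcongr
  rcases min_cases (d / γ) Δ with ⟨hmin, _⟩ | ⟨hmin, _⟩ <;> rw [hmin]
  · refine (min_le_left _ _).trans ((min_le_right _ _).trans ?_)
    rw [div_mul_div_cancel₀ hd.ne']
    gcongr
  · refine (min_le_right _ _).trans ?_
    rw [div_mul_eq_mul_div, mul_comm N Δ]
    gcongr

lemma abs_hform_normalize_le {n : ℕ}
    (H : Matrix (Fin n) (Fin n) ℝ →L[ℝ] Matrix (Fin n) (Fin n) ℝ) (D : Matrix (Fin n) (Fin n) ℝ)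
    {M : ℝ} (h : |hform H D D| / mip D D ≤ M) :
    |hform H ((fnorm D)⁻¹ • D) ((fnorm D)⁻¹ • D)| ≤ M := by
  rwa [hform, map_smul, mip_smul_left, mip_smul_right, ← hform, ← mul_assoc, ← sq, abs_mul,
    abs_of_nonneg (sq_nonneg _), inv_pow, fnorm_sq, inv_mul_eq_div]

theorem q_decrease_bound'_general {n : ℕ}
    (f : Matrix (Fin n) (Fin n) ℝ → ℝ)
    (grad : Matrix (Fin n) (Fin n) ℝ → Matrix (Fin n) (Fin n) ℝ)
    (hessOp : Matrix (Fin n) (Fin n) ℝ →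
      Matrix (Fin n) (Fin n) ℝ →L[ℝ] Matrix (Fin n) (Fin n) ℝ)
    (M₁ M₂ : ℝ)
    (hM1 : IsGreatest {r : ℝ | ∃ X ∈ Feas n, r = norm2 (grad X)} M₁)
    (hM2 : IsGreatest {r : ℝ | ∃ X ∈ Feas n, ∃ D : Matrix (Fin n) (Fin n) ℝ,
      D.IsSymm ∧ D ≠ 0 ∧ r = |hform (hessOp X) D D| / mip D D} M₂)
    (Xk : Matrix (Fin n) (Fin n) ℝ) (hXk : Xk ∈ Feas n)
    (sd : SpecDecomp n (grad Xk))
    (hN : 0 < sd.Nval Xk)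
    (Δk : ℝ) (hΔk : 0 < Δk)
    (S : Matrix (Fin n) (Fin n) ℝ)
    (hS : S = (fnorm (sd.Dmat Xk))⁻¹ • sd.Dmat Xk)
    (q : ℝ → ℝ)
    (hq : ∀ a : ℝ, q a = f Xk - a * mip (grad Xk) S
        + a ^ 2 / 2 * hform (hessOp Xk) S S)
    (αk : ℝ)
    (hαmin : ∀ a ∈ Set.Icc 0 (min (fnorm (sd.Dmat Xk) / norm2 (grad Xk)) Δk),
      q αk ≤ q a) :
    q αk ≤ f Xk - (1 / 2) * min (min
        (sd.Nval Xk ^ 2 / (M₂ * (sd.Nval Xk + (1 / 2) * M₁ ^ 2 * (n : ℝ) ^ 3)))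
        (sd.Nval Xk / M₁))
        (Δk * sd.Nval Xk / Real.sqrt (sd.Nval Xk + (1 / 2) * M₁ ^ 2 * (n : ℝ) ^ 3)) := by
  set D := sd.Dmat Xk
  set N := sd.Nval Xk
  set d := fnorm D
  have hD : D ≠ 0 := fun h => by simp [N, SpecDecomp.Nval, D, h, mip_zero_right] at hN
  have hd : 0 < d := fnorm_pos hD
  have hγ : 0 < norm2 (grad Xk) := norm2_pos sd.isHermitian fun h => by
    simp [N, SpecDecomp.Nval, h, mip_zero_left] at hN
  have hHS : |hform (hessOp Xk) S S| ≤ M₂ :=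
    hS ▸ abs_hform_normalize_le _ D (hM2.2 ⟨Xk, hXk, D, sd.Dmat_isSymm hXk, hD, rfl⟩)
  have hgS : mip (grad Xk) S = N / d := by
    rw [hS, mip_smul_right, inv_mul_eq_div]
    rfl
  have hγM₁ : norm2 (grad Xk) ≤ M₁ := hM1.2 ⟨Xk, hXk, rfl⟩
  have hdB : d ^ 2 ≤ N + 1 / 2 * M₁ ^ 2 * (n : ℝ) ^ 3 := by
    have hγ2 := pow_le_pow_left₀ hγ.le hγM₁ 2
    rw [fnorm_sq]
    nlinarith [sd.mip_Dmat_self_le_cube hXk, pow_nonneg (Nat.cast_nonneg n : (0 : ℝ) ≤ n) 3]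
  obtain ⟨a, ha, hqa⟩ := exists_mem_Icc_quadratic_le (div_pos hN hd)
    (le_min (div_pos hd hγ).le hΔk.le) hHS
  have hmin := min_le_min_cauchy_decrease hN hd hγ hΔk.le ((abs_nonneg _).trans hHS) hγM₁ hdB
  have hαa := hαmin a ha
  rw [hq a, hgS] at hαa
  linarith

theorem q_decrease_bound' {n : ℕ}
    (f : Matrix (Fin n) (Fin n) ℝ → ℝ)
    (grad : Matrix (Fin n) (Fin n) ℝ → Matrix (Fin n) (Fin n) ℝ)
    (hgradsym : ∀ X ∈ Feas n, (grad X).IsSymm)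
    (hgrad : ∀ X ∈ Feas n, HasFDerivAt f (gradCLM (grad X)) X)
    (hessOp : Matrix (Fin n) (Fin n) ℝ →
      Matrix (Fin n) (Fin n) ℝ →L[ℝ] Matrix (Fin n) (Fin n) ℝ)
    (hhess : ∀ X ∈ Feas n, HasFDerivAt grad (hessOp X) X)
    (M₁ M₂ : ℝ)
    (hM1 : IsGreatest {r : ℝ | ∃ X ∈ Feas n, r = norm2 (grad X)} M₁)
    (hM2 : IsGreatest {r : ℝ | ∃ X ∈ Feas n, ∃ D : Matrix (Fin n) (Fin n) ℝ,
      D.IsSymm ∧ D ≠ 0 ∧ r = |hform (hessOp X) D D| / mip D D} M₂)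
    (hM1pos : 0 < M₁) (hM2pos : 0 < M₂)
    (Xk : Matrix (Fin n) (Fin n) ℝ) (hXk : Xk ∈ Feas n)
    (sd : SpecDecomp n (grad Xk))
    (hN : 0 < sd.Nval Xk)
    (Δk : ℝ) (hΔk : 0 < Δk)
    (S : Matrix (Fin n) (Fin n) ℝ)
    (hS : S = (fnorm (sd.Dmat Xk))⁻¹ • sd.Dmat Xk)
    (q : ℝ → ℝ)
    (hq : ∀ a : ℝ, q a = f Xk - a * mip (grad Xk) S
        + a ^ 2 / 2 * hform (hessOp Xk) S S)
    (αk : ℝ)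
    (hαmem : αk ∈ Set.Icc 0 (min (fnorm (sd.Dmat Xk) / norm2 (grad Xk)) Δk))
    (hαmin : ∀ a ∈ Set.Icc 0 (min (fnorm (sd.Dmat Xk) / norm2 (grad Xk)) Δk),
      q αk ≤ q a) :
    q αk ≤ f Xk - (1 / 2) * min (min
        (sd.Nval Xk ^ 2 / (M₂ * (sd.Nval Xk + (1 / 2) * M₁ ^ 2 * (n : ℝ) ^ 3)))
        (sd.Nval Xk / M₁))
        (Δk * sd.Nval Xk / Real.sqrt (sd.Nval Xk + (1 / 2) * M₁ ^ 2 * (n : ℝ) ^ 3)) :=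
  q_decrease_bound'_general f grad hessOp M₁ M₂ hM1 hM2 Xk hXk sd hN Δk hΔk S hS q hq αk hαmin

end BoxSDP
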